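/- Let I ⊆ ℝ be an interval, γ = (γ₁,γ₂) : I → ℝ² a C² curve parameterized by arc-length (γ₁'(s)² + γ₂'(s)² = 1 for all s), and h₀ : I → ℝ a C¹ function. Define θ(s,r) = (x(s,r), y(s,r), t(s,r)) = (γ₁(s)+rγ₂'(s), γ₂(s)−rγ₁'(s), h₀(s) − (r/2)·γ(s)·γ'(s)), and set p = y_s t_r − y_r t_s − (y/2)(x_s y_r − x_r y_s), q = x_r t_s − x_s t_r + (x/2)(x_s y_r − x_r y_s), ω = x_s y_r − x_r y_s (subscripts denoting partial derivatives, everything evaluated at (s,r)). Then, with κ(s) = γ''(s)·γ'(s)^⊥ the signed curvature and (v₁,v₂)^⊥ = (v₂,−v₁): p = γ₁'(s)·A(s,r), q = γ₂'(s)·A(s,r), ω = −(1 − r·κ(s)), where A(s,r) = h₀'(s) − r + (r²/2)κ(s) + (1/2)γ'(s)·γ(s)^⊥; consequently the angle function satisfies √(p² + q²) = |h₀'(s) − r + (r²/2)κ(s) + (1/2)γ'(s)·γ(s)^⊥|. -/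

import Mathlib

/-- `x(s,r) = γ₁(s) + rγ₂'(s)`. -/
noncomputable def xF (γ₁ γ₂ : ℝ → ℝ) (s r : ℝ) : ℝ := γ₁ s + r * deriv γ₂ s

/-- `y(s,r) = γ₂(s) − rγ₁'(s)`. -/
noncomputable def yF (γ₁ γ₂ : ℝ → ℝ) (s r : ℝ) : ℝ := γ₂ s - r * deriv γ₁ s

/-- `t(s,r) = h₀(s) − (r/2)·γ(s)·γ'(s)`. -/
noncomputable def tF (γ₁ γ₂ h₀ : ℝ → ℝ) (s r : ℝ) : ℝ :=
  h₀ s - r / 2 * (γ₁ s * deriv γ₁ s + γ₂ s * deriv γ₂ s)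

/-- `ω = x_s y_r − x_r y_s`. -/
noncomputable def omF (γ₁ γ₂ : ℝ → ℝ) (s r : ℝ) : ℝ :=
  deriv (fun s' => xF γ₁ γ₂ s' r) s * deriv (fun r' => yF γ₁ γ₂ s r') r
    - deriv (fun r' => xF γ₁ γ₂ s r') r * deriv (fun s' => yF γ₁ γ₂ s' r) s

/-- `p = y_s t_r − y_r t_s − (y/2)(x_s y_r − x_r y_s)`. -/
noncomputable def pF (γ₁ γ₂ h₀ : ℝ → ℝ) (s r : ℝ) : ℝ :=
  deriv (fun s' => yF γ₁ γ₂ s' r) s * deriv (fun r' => tF γ₁ γ₂ h₀ s r') r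
    - deriv (fun r' => yF γ₁ γ₂ s r') r * deriv (fun s' => tF γ₁ γ₂ h₀ s' r) s
    - yF γ₁ γ₂ s r / 2 * omF γ₁ γ₂ s r

/-- `q = x_r t_s − x_s t_r + (x/2)(x_s y_r − x_r y_s)`. -/
noncomputable def qF (γ₁ γ₂ h₀ : ℝ → ℝ) (s r : ℝ) : ℝ :=
  deriv (fun r' => xF γ₁ γ₂ s r') r * deriv (fun s' => tF γ₁ γ₂ h₀ s' r) s
    - deriv (fun s' => xF γ₁ γ₂ s' r) s * deriv (fun r' => tF γ₁ γ₂ h₀ s r') r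
    + xF γ₁ γ₂ s r / 2 * omF γ₁ γ₂ s r

/-- The signed curvature `κ = γ''·γ'^⊥ = γ₁''γ₂' − γ₂''γ₁'`. -/
noncomputable def kappaF (γ₁ γ₂ : ℝ → ℝ) (s : ℝ) : ℝ :=
  deriv (deriv γ₁) s * deriv γ₂ s - deriv (deriv γ₂) s * deriv γ₁ s

/-- `A(s,r) = h₀'(s) − r + (r²/2)κ(s) + (1/2)γ'(s)·γ(s)^⊥`, with `γ'·γ^⊥ = γ₁'γ₂ − γ₂'γ₁`. -/
noncomputable def AF (γ₁ γ₂ h₀ : ℝ → ℝ) (s r : ℝ) : ℝ :=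
  deriv h₀ s - r + r ^ 2 / 2 * kappaF γ₁ γ₂ s
    + 1 / 2 * (deriv γ₁ s * γ₂ s - deriv γ₂ s * γ₁ s)

/-!
`θ` is affine in `r`, so its `r`-derivatives are just the coefficients `γ₂'`, `−γ₁'`, `−γ·γ'/2`.
After substitution, the arc-length identity `γ₁'² + γ₂'² = 1` turns `ω`, `p`, `q` into polynomial
identities, and once more gives `W = |A|·|γ'| = |A|`.
-/

section SeedCurve

variable {γ₁ γ₂ h₀ : ℝ → ℝ} {s : ℝ}

lemma deriv_xF_s (r : ℝ) (h₁ : DifferentiableAt ℝ γ₁ s)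
    (h₂' : DifferentiableAt ℝ (deriv γ₂) s) :
    deriv (fun s' => xF γ₁ γ₂ s' r) s = deriv γ₁ s + r * deriv (deriv γ₂) s :=
  (h₁.hasDerivAt.add (h₂'.hasDerivAt.const_mul r)).deriv

lemma deriv_yF_s (r : ℝ) (h₂ : DifferentiableAt ℝ γ₂ s)
    (h₁' : DifferentiableAt ℝ (deriv γ₁) s) :
    deriv (fun s' => yF γ₁ γ₂ s' r) s = deriv γ₂ s - r * deriv (deriv γ₁) s :=
  (h₂.hasDerivAt.sub (h₁'.hasDerivAt.const_mul r)).deriv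

lemma deriv_tF_s (r : ℝ) (h₁ : DifferentiableAt ℝ γ₁ s) (h₂ : DifferentiableAt ℝ γ₂ s)
    (h₁' : DifferentiableAt ℝ (deriv γ₁) s) (h₂' : DifferentiableAt ℝ (deriv γ₂) s)
    (hh₀ : DifferentiableAt ℝ h₀ s) :
    deriv (fun s' => tF γ₁ γ₂ h₀ s' r) s = deriv h₀ s - r / 2 *
      ((deriv γ₁ s * deriv γ₁ s + γ₁ s * deriv (deriv γ₁) s)
        + (deriv γ₂ s * deriv γ₂ s + γ₂ s * deriv (deriv γ₂) s)) :=
  (hh₀.hasDerivAt.sub (((h₁.hasDerivAt.mul h₁'.hasDerivAt).add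
    (h₂.hasDerivAt.mul h₂'.hasDerivAt)).const_mul (r / 2))).deriv

lemma deriv_xF_r (r : ℝ) : deriv (fun r' => xF γ₁ γ₂ s r') r = deriv γ₂ s := by
  simp [xF]

lemma deriv_yF_r (r : ℝ) : deriv (fun r' => yF γ₁ γ₂ s r') r = -deriv γ₁ s := by
  simp [yF]

lemma deriv_tF_r (r : ℝ) :
    deriv (fun r' => tF γ₁ γ₂ h₀ s r') r = -(1 / 2 * (γ₁ s * deriv γ₁ s + γ₂ s * deriv γ₂ s)) := by
  simp [tF]

lemma omF_eq (r : ℝ) (h₁ : DifferentiableAt ℝ γ₁ s) (h₂ : DifferentiableAt ℝ γ₂ s)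
    (h₁' : DifferentiableAt ℝ (deriv γ₁) s) (h₂' : DifferentiableAt ℝ (deriv γ₂) s)
    (harc : deriv γ₁ s ^ 2 + deriv γ₂ s ^ 2 = 1) :
    omF γ₁ γ₂ s r = -(1 - r * kappaF γ₁ γ₂ s) := by
  rw [omF, deriv_xF_s r h₁ h₂', deriv_xF_r, deriv_yF_s r h₂ h₁', deriv_yF_r, kappaF]
  linear_combination -harc

lemma pF_eq (r : ℝ) (h₁ : DifferentiableAt ℝ γ₁ s) (h₂ : DifferentiableAt ℝ γ₂ s)
    (h₁' : DifferentiableAt ℝ (deriv γ₁) s) (h₂' : DifferentiableAt ℝ (deriv γ₂) s)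
    (hh₀ : DifferentiableAt ℝ h₀ s) (harc : deriv γ₁ s ^ 2 + deriv γ₂ s ^ 2 = 1) :
    pF γ₁ γ₂ h₀ s r = deriv γ₁ s * AF γ₁ γ₂ h₀ s r := by
  rw [pF, omF_eq r h₁ h₂ h₁' h₂' harc, deriv_yF_s r h₂ h₁', deriv_yF_r,
    deriv_tF_s r h₁ h₂ h₁' h₂' hh₀, deriv_tF_r, AF, kappaF, yF]
  linear_combination -(r * deriv γ₁ s + γ₂ s) / 2 * harc

lemma qF_eq (r : ℝ) (h₁ : DifferentiableAt ℝ γ₁ s) (h₂ : DifferentiableAt ℝ γ₂ s)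
    (h₁' : DifferentiableAt ℝ (deriv γ₁) s) (h₂' : DifferentiableAt ℝ (deriv γ₂) s)
    (hh₀ : DifferentiableAt ℝ h₀ s) (harc : deriv γ₁ s ^ 2 + deriv γ₂ s ^ 2 = 1) :
    qF γ₁ γ₂ h₀ s r = deriv γ₂ s * AF γ₁ γ₂ h₀ s r := by
  rw [qF, omF_eq r h₁ h₂ h₁' h₂' harc, deriv_xF_s r h₁ h₂', deriv_xF_r,
    deriv_tF_s r h₁ h₂ h₁' h₂' hh₀, deriv_tF_r, AF, kappaF, xF]
  linear_combination (γ₁ s - r * deriv γ₂ s) / 2 * harc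

end SeedCurve

lemma Real.sqrt_sq_mul_add_sq_mul {a b : ℝ} (c : ℝ) (hab : a ^ 2 + b ^ 2 = 1) :
    √((a * c) ^ 2 + (b * c) ^ 2) = |c| := by
  rw [show (a * c) ^ 2 + (b * c) ^ 2 = c ^ 2 by linear_combination c ^ 2 * hab,
    Real.sqrt_sq_eq_abs]

lemma ContDiffOn.differentiableAt_deriv_of_isOpen {f : ℝ → ℝ} {I : Set ℝ} {s : ℝ}
    (hf : ContDiffOn ℝ 2 f I) (hI : IsOpen I) (hs : s ∈ I) :
    DifferentiableAt ℝ (deriv f) s :=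
  ((hf.deriv_of_isOpen hI (by norm_num : (1 : WithTop ℕ∞) + 1 ≤ 2)).contDiffAt
    (hI.mem_nhds hs)).differentiableAt one_ne_zero

theorem stmt15_general (I : Set ℝ) (hIo : IsOpen I)
    (γ₁ γ₂ h₀ : ℝ → ℝ)
    (hγ₁ : ContDiffOn ℝ 2 γ₁ I) (hγ₂ : ContDiffOn ℝ 2 γ₂ I)
    (hh₀ : ContDiffOn ℝ 1 h₀ I)
    (harc : ∀ s ∈ I, deriv γ₁ s ^ 2 + deriv γ₂ s ^ 2 = 1) :
    ∀ s ∈ I, ∀ r : ℝ,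
      pF γ₁ γ₂ h₀ s r = deriv γ₁ s * AF γ₁ γ₂ h₀ s r ∧
      qF γ₁ γ₂ h₀ s r = deriv γ₂ s * AF γ₁ γ₂ h₀ s r ∧
      omF γ₁ γ₂ s r = -(1 - r * kappaF γ₁ γ₂ s) ∧
      Real.sqrt (pF γ₁ γ₂ h₀ s r ^ 2 + qF γ₁ γ₂ h₀ s r ^ 2) = |AF γ₁ γ₂ h₀ s r| := by
  intro s hs r
  have hnhds := hIo.mem_nhds hs
  have h₁ := (hγ₁.contDiffAt hnhds).differentiableAt two_ne_zero
  have h₂ := (hγ₂.contDiffAt hnhds).differentiableAt two_ne_zero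
  have h₁' := hγ₁.differentiableAt_deriv_of_isOpen hIo hs
  have h₂' := hγ₂.differentiableAt_deriv_of_isOpen hIo hs
  have hh := (hh₀.contDiffAt hnhds).differentiableAt one_ne_zero
  have hp := pF_eq r h₁ h₂ h₁' h₂' hh (harc s hs)
  have hq := qF_eq r h₁ h₂ h₁' h₂' hh (harc s hs)
  refine ⟨hp, hq, omF_eq r h₁ h₂ h₁' h₂' (harc s hs), ?_⟩
  rw [hp, hq, Real.sqrt_sq_mul_add_sq_mul _ (harc s hs)]

/-- for the seed-curve parameterization of an H-minimal patch, with `γ`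
parameterized by arc-length, one has `p = γ₁'·A`, `q = γ₂'·A`, `ω = −(1 − rκ)`, and the angle
function satisfies `√(p²+q²) = |A|`, where
`A = h₀'(s) − r + (r²/2)κ(s) + (1/2)γ'(s)·γ(s)^⊥`. -/
theorem stmt15 (I : Set ℝ) (hIo : IsOpen I) (hIc : I.OrdConnected)
    (γ₁ γ₂ h₀ : ℝ → ℝ)
    (hγ₁ : ContDiffOn ℝ 2 γ₁ I) (hγ₂ : ContDiffOn ℝ 2 γ₂ I)
    (hh₀ : ContDiffOn ℝ 1 h₀ I)
    (harc : ∀ s ∈ I, deriv γ₁ s ^ 2 + deriv γ₂ s ^ 2 = 1) :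
    ∀ s ∈ I, ∀ r : ℝ,
      pF γ₁ γ₂ h₀ s r = deriv γ₁ s * AF γ₁ γ₂ h₀ s r ∧
      qF γ₁ γ₂ h₀ s r = deriv γ₂ s * AF γ₁ γ₂ h₀ s r ∧
      omF γ₁ γ₂ s r = -(1 - r * kappaF γ₁ γ₂ s) ∧
      Real.sqrt (pF γ₁ γ₂ h₀ s r ^ 2 + qF γ₁ γ₂ h₀ s r ^ 2) = |AF γ₁ γ₂ h₀ s r| :=
  stmt15_general I hIo γ₁ γ₂ h₀ hγ₁ hγ₂ hh₀ harc
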